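/- Let X_1,…,X_n be i.i.d. real random variables with distribution Q and mean μ, and suppose that for some b > 0, E_Q[exp(θ(X_1 − μ))] ≤ b for all θ ∈ [−1, 1]. Then (1) for every θ ∈ [0, 1/2], E_Q[exp(θ(X_1 − μ))] ≤ exp(2bθ²), and (2) for every α ∈ (0,1), P_Q( (1/n)·∑_{i=1}^n (X_i − μ) ≥ √(8b·log(1/α)/n) + 4·log(1/α)/n ) ≤ α. -/

import Mathlib

/-!
For `|θ| ≤ 1` the exponential series gives `exp (θ y) - 1 - θ y ≤ θ² (exp |y| - 1 - |y|)`, and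
`exp |y| ≤ exp y + exp (-y)`. Taking expectations with `Y = X₁ - μ` (mean zero) yields
`E exp (θ Y) ≤ 1 + θ² (E exp Y + E exp (-Y)) ≤ 1 + 2bθ² ≤ exp (2bθ²)`, which is (1).
For (2), the Chernoff bound for the independent sum gives the tail bound
`exp (-θ n t + 2bnθ²)` for every `θ ∈ [0, 1/2]`; the choice `θ = min (1/2) √(L / (2bn))`
with `L = log (1/α)` makes the exponent at most `-L` when `t = √(8bL/n) + 4L/n`.
-/

open MeasureTheory ProbabilityTheory Real
open scoped ENNReal Nat

namespace Real

lemma exp_sub_one_sub_eq_tsum (x : ℝ) :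
    exp x - 1 - x = ∑' n : ℕ, x ^ (n + 2) / (n + 2)! := by
  have h := summable_pow_div_factorial x
  rw [exp_eq_exp_ℝ, NormedSpace.exp_eq_tsum_div]
  beta_reduce
  rw [h.tsum_eq_zero_add, ((summable_nat_add_iff 1).mpr h).tsum_eq_zero_add]
  simp

lemma exp_mul_sub_one_sub_le {θ : ℝ} (hθ : |θ| ≤ 1) (y : ℝ) :
    exp (θ * y) - 1 - θ * y ≤ θ ^ 2 * (exp |y| - 1 - |y|) := by
  rw [exp_sub_one_sub_eq_tsum, exp_sub_one_sub_eq_tsum, ← tsum_mul_left]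
  refine Summable.tsum_le_tsum (fun n => ?_) ((summable_nat_add_iff 2).mpr
    (summable_pow_div_factorial _)) (((summable_nat_add_iff 2).mpr
    (summable_pow_div_factorial _)).mul_left _)
  rw [← mul_div_assoc]
  gcongr
  calc (θ * y) ^ (n + 2) ≤ |θ| ^ (n + 2) * |y| ^ (n + 2) := by
        rw [← mul_pow, ← abs_mul]; exact le_abs_self _ |>.trans (abs_pow _ _).le
    _ ≤ |θ| ^ 2 * |y| ^ (n + 2) := by
        gcongr ?_ * _
        exact pow_le_pow_of_le_one (abs_nonneg θ) hθ (by omega)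
    _ = θ ^ 2 * |y| ^ (n + 2) := by rw [sq_abs]

end Real

lemma Finset.sum_Icc_one_eq_sum_fin {M : Type*} [AddCommMonoid M] (n : ℕ) (f : ℕ → M) :
    ∑ i ∈ Finset.Icc 1 n, f i = ∑ i : Fin n, f (i + 1) := by
  rw [Fin.sum_univ_eq_sum_range (fun i => f (i + 1)), Finset.range_eq_Ico, Finset.sum_Ico_add']
  rfl

lemma exists_mem_Icc_neg_mul_add_mul_sq_le {c L N : ℝ} (hc : 0 < c) (hL : 0 < L) (hN : 0 < N) :
    ∃ θ ∈ Set.Icc (0 : ℝ) (1 / 2),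
      -θ * (N * (√(4 * c * L / N) + 4 * L / N)) + N * c * θ ^ 2 ≤ -L := by
  set R := √(4 * c * L / N)
  have hR : 0 ≤ R := sqrt_nonneg _
  set s := √(L / (c * N))
  have hs : 0 ≤ s := sqrt_nonneg _
  have hs2 : s ^ 2 = L / (c * N) := sq_sqrt (by positivity)
  rcases le_or_gt s (1 / 2) with hs_le | hs_gt
  · refine ⟨s, ⟨hs, hs_le⟩, ?_⟩
    have hsR : s * R = 2 * L / N := by
      rw [← sqrt_mul (by positivity), show L / (c * N) * (4 * c * L / N) = (2 * L / N) ^ 2 by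
        field_simp; ring, sqrt_sq (by positivity)]
    have hquad : N * c * s ^ 2 = L := by rw [hs2]; field_simp
    have hlin : s * (N * (R + 4 * L / N)) = 2 * L + 4 * L * s := by
      rw [show s * (N * (R + 4 * L / N)) = N * (s * R) + 4 * L * s by field_simp, hsR]
      field_simp
    nlinarith [mul_nonneg hL.le hs]
  · refine ⟨1 / 2, ⟨by norm_num, le_rfl⟩, ?_⟩
    have hcN : c * N < 4 * L := by
      have := hs2 ▸ (show (1 / 2 : ℝ) ^ 2 < s ^ 2 by gcongr)
      rw [lt_div_iff₀ (by positivity)] at this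
      linarith
    have hlin : 1 / 2 * (N * (R + 4 * L / N)) = N * R / 2 + 2 * L := by field_simp; ring
    nlinarith [mul_nonneg hN.le hR]

section Moments

variable {Ω : Type*} {mΩ : MeasurableSpace Ω} {Q : Measure Ω}

lemma integrable_exp_mul_of_lintegral_ne_top {Y : Ω → ℝ} {t : ℝ} (hY : AEMeasurable Y Q)
    (h : ∫⁻ ω, ENNReal.ofReal (exp (t * Y ω)) ∂Q ≠ ∞) :
    Integrable (fun ω ↦ exp (t * Y ω)) Q :=
  (lintegral_ofReal_ne_top_iff_integrable (by fun_prop)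
    (ae_of_all _ fun _ ↦ (exp_pos _).le)).mp h

lemma ofReal_mgf {Y : Ω → ℝ} {t : ℝ} (h : Integrable (fun ω ↦ exp (t * Y ω)) Q) :
    ENNReal.ofReal (mgf Y Q t) = ∫⁻ ω, ENNReal.ofReal (exp (t * Y ω)) ∂Q :=
  ofReal_integral_eq_lintegral_ofReal h (ae_of_all _ fun _ ↦ (exp_pos _).le)

lemma mgf_le_one_add_sq_mul [IsProbabilityMeasure Q] {Y : Ω → ℝ} (hY : Integrable Y Q)
    (h_mean : Q[Y] = 0)
    (h_int : ∀ t ∈ Set.Icc (-1 : ℝ) 1, Integrable (fun ω ↦ exp (t * Y ω)) Q)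
    {θ : ℝ} (hθ : θ ∈ Set.Icc (-1 : ℝ) 1) :
    mgf Y Q θ ≤ 1 + θ ^ 2 * (mgf Y Q 1 + mgf Y Q (-1)) := by
  have h_pos := h_int 1 (by norm_num)
  have h_neg := h_int (-1) (by norm_num)
  have h_bound : Integrable (fun ω ↦ 1 + θ * Y ω
      + θ ^ 2 * (exp (1 * Y ω) + exp (-1 * Y ω))) Q :=
    ((integrable_const 1).add (hY.const_mul θ)).add ((h_pos.add h_neg).const_mul _)
  calc mgf Y Q θ
      ≤ ∫ ω, (1 + θ * Y ω + θ ^ 2 * (exp (1 * Y ω) + exp (-1 * Y ω))) ∂Q := by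
        refine integral_mono (h_int θ hθ) h_bound fun ω ↦ ?_
        have h_abs : exp |Y ω| ≤ exp (1 * Y ω) + exp (-1 * Y ω) := by
          rcases abs_cases (Y ω) with ⟨h, _⟩ | ⟨h, _⟩ <;> rw [h] <;>
            simp only [one_mul, neg_one_mul, le_add_iff_nonneg_right,
              le_add_iff_nonneg_left, (exp_pos _).le]
        have h_series := exp_mul_sub_one_sub_le (abs_le.mpr hθ) (Y ω)
        nlinarith [sq_nonneg θ, abs_nonneg (Y ω)]
    _ = 1 + θ ^ 2 * (mgf Y Q 1 + mgf Y Q (-1)) := by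
        rw [integral_add ((integrable_const 1).fun_add (hY.const_mul θ))
            ((h_pos.fun_add h_neg).const_mul _),
          integral_add (integrable_const 1) (hY.const_mul θ), integral_const_mul,
          integral_const_mul, integral_add h_pos h_neg, h_mean]
        simp [mgf]

lemma mgf_le_exp_two_mul_sq [IsProbabilityMeasure Q] {Y : Ω → ℝ} (hY : Integrable Y Q)
    (h_mean : Q[Y] = 0)
    (h_int : ∀ t ∈ Set.Icc (-1 : ℝ) 1, Integrable (fun ω ↦ exp (t * Y ω)) Q)
    {b : ℝ} (h_one : mgf Y Q 1 ≤ b) (h_neg_one : mgf Y Q (-1) ≤ b)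
    {θ : ℝ} (hθ : θ ∈ Set.Icc (-1 : ℝ) 1) :
    mgf Y Q θ ≤ exp (2 * b * θ ^ 2) :=
  calc mgf Y Q θ ≤ 1 + θ ^ 2 * (mgf Y Q 1 + mgf Y Q (-1)) :=
        mgf_le_one_add_sq_mul hY h_mean h_int hθ
    _ ≤ 2 * b * θ ^ 2 + 1 := by nlinarith [sq_nonneg θ]
    _ ≤ exp (2 * b * θ ^ 2) := add_one_le_exp _

lemma measureReal_sum_ge_le_of_mgf_le {ι : Type*} [Fintype ι] {Z : ι → Ω → ℝ}
    (h_indep : iIndepFun Z Q) (h_meas : ∀ i, Measurable (Z i)) {c θ : ℝ} (hθ : 0 ≤ θ)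
    (h_int : ∀ i, Integrable (fun ω ↦ exp (θ * Z i ω)) Q)
    (h_mgf : ∀ i, mgf (Z i) Q θ ≤ exp (c * θ ^ 2)) (ε : ℝ) :
    Q.real {ω | ε ≤ ∑ i, Z i ω} ≤ exp (-θ * ε + Fintype.card ι * c * θ ^ 2) := by
  have := h_indep.isProbabilityMeasure
  calc Q.real {ω | ε ≤ ∑ i, Z i ω}
      ≤ exp (-θ * ε) * mgf (∑ i, Z i) Q θ := by
        simpa only [Finset.sum_apply] using
          measure_ge_le_exp_mul_mgf ε hθ (h_indep.integrable_exp_mul_sum h_meas fun i _ ↦ h_int i)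
    _ = exp (-θ * ε) * ∏ i, mgf (Z i) Q θ := by rw [h_indep.mgf_sum h_meas]
    _ ≤ exp (-θ * ε) * ∏ _i : ι, exp (c * θ ^ 2) := by
        gcongr with i
        · exact fun i _ ↦ mgf_nonneg
        · exact h_mgf i
    _ = exp (-θ * ε + Fintype.card ι * c * θ ^ 2) := by
        rw [Finset.prod_const, Finset.card_univ, ← exp_nat_mul, ← exp_add]
        ring_nf

theorem measureReal_mean_ge_le_exp_neg {ι : Type*} [Fintype ι] [Nonempty ι] {Z : ι → Ω → ℝ}
    (h_indep : iIndepFun Z Q) (h_meas : ∀ i, Measurable (Z i)) {c L : ℝ} (hc : 0 < c)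
    (hL : 0 < L)
    (h_mgf : ∀ i, ∀ θ ∈ Set.Icc (0 : ℝ) (1 / 2),
      Integrable (fun ω ↦ exp (θ * Z i ω)) Q ∧ mgf (Z i) Q θ ≤ exp (c * θ ^ 2)) :
    Q.real {ω | √(4 * c * L / Fintype.card ι) + 4 * L / Fintype.card ι ≤
      (1 / (Fintype.card ι : ℝ)) * ∑ i, Z i ω} ≤ exp (-L) := by
  set N : ℝ := (Fintype.card ι : ℝ)
  have hN : 0 < N := by simp [N, Fintype.card_pos]
  obtain ⟨θ, hθ, h_exponent⟩ := exists_mem_Icc_neg_mul_add_mul_sq_le hc hL hN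
  have h_set : {ω | √(4 * c * L / N) + 4 * L / N ≤ 1 / N * ∑ i, Z i ω}
      = {ω | N * (√(4 * c * L / N) + 4 * L / N) ≤ ∑ i, Z i ω} := by
    ext ω
    rw [Set.mem_ofPred_eq, Set.mem_ofPred_eq, one_div_mul_eq_div, le_div_iff₀ hN, mul_comm]
  rw [h_set]
  refine (measureReal_sum_ge_le_of_mgf_le h_indep h_meas hθ.1 (fun i ↦ (h_mgf i θ hθ).1)
    (fun i ↦ (h_mgf i θ hθ).2) _).trans ?_
  exact exp_le_exp.mpr h_exponent

end Moments

/-- Root-`n` confidence intervals under finite MGFs: if `E_Q[exp (θ (X 1 - μ))] ≤ b` for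
all `θ ∈ [-1,1]`, then (1) `E_Q[exp (θ (X 1 - μ))] ≤ exp (2bθ²)` for all `θ ∈ [0,1/2]`,
and (2) for every `α ∈ (0,1)`,
`Q((1/n) ∑_{i=1}^n (X i - μ) ≥ √(8b log(1/α)/n) + 4 log(1/α)/n) ≤ α`. -/
theorem stmt16
    {Ω : Type*} {mΩ : MeasurableSpace Ω} (Q : Measure Ω) [IsProbabilityMeasure Q]
    (n : ℕ) (hn : 1 ≤ n)
    (X : ℕ → Ω → ℝ) (hXmeas : ∀ i, Measurable (X i))
    (hindep : iIndepFun (fun i : Fin n => X (i + 1)) Q)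
    (hident : ∀ i ∈ Finset.Icc 1 n, IdentDistrib (X i) (X 1) Q Q)
    (μ : ℝ) (hint : Integrable (X 1) Q) (hμ : μ = ∫ ω, X 1 ω ∂Q)
    (b : ℝ) (hb : 0 < b)
    (hmgf : ∀ θ ∈ Set.Icc (-1 : ℝ) 1,
      ∫⁻ ω, ENNReal.ofReal (Real.exp (θ * (X 1 ω - μ))) ∂Q ≤ ENNReal.ofReal b) :
    (∀ θ ∈ Set.Icc (0 : ℝ) (1 / 2),
      ∫⁻ ω, ENNReal.ofReal (Real.exp (θ * (X 1 ω - μ))) ∂Q ≤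
        ENNReal.ofReal (Real.exp (2 * b * θ ^ 2))) ∧
    (∀ α ∈ Set.Ioo (0 : ℝ) 1,
      Q {ω | Real.sqrt (8 * b * Real.log (1 / α) / n) + 4 * Real.log (1 / α) / n ≤
          (1 / (n : ℝ)) * ∑ i ∈ Finset.Icc 1 n, (X i ω - μ)} ≤ ENNReal.ofReal α) := by
  set Y : Ω → ℝ := fun ω ↦ X 1 ω - μ
  have hY_meas : Measurable Y := (hXmeas 1).sub measurable_const
  have hY_int : ∀ t ∈ Set.Icc (-1 : ℝ) 1, Integrable (fun ω ↦ exp (t * Y ω)) Q := fun t ht ↦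
    integrable_exp_mul_of_lintegral_ne_top hY_meas.aemeasurable
      (ne_top_of_le_ne_top ENNReal.ofReal_ne_top (hmgf t ht))
  have hY_mgf : ∀ t ∈ Set.Icc (-1 : ℝ) 1, mgf Y Q t ≤ b := fun t ht ↦
    (ENNReal.ofReal_le_ofReal_iff hb.le).mp (ofReal_mgf (hY_int t ht) ▸ hmgf t ht)
  have hY_mean : Q[Y] = 0 := by
    rw [integral_sub hint (integrable_const μ), ← hμ]
    simp
  have h_half : ∀ θ ∈ Set.Icc (0 : ℝ) (1 / 2),
      Integrable (fun ω ↦ exp (θ * Y ω)) Q ∧ mgf Y Q θ ≤ exp (2 * b * θ ^ 2) := fun θ hθ ↦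
    have hθ' := Set.Icc_subset_Icc (by norm_num) (by norm_num) hθ
    ⟨hY_int θ hθ', mgf_le_exp_two_mul_sq (hint.sub (integrable_const μ)) hY_mean hY_int
      (hY_mgf 1 (by norm_num)) (hY_mgf (-1) (by norm_num)) hθ'⟩
  refine ⟨fun θ hθ ↦ ?_, fun α ⟨hα0, hα1⟩ ↦ ?_⟩
  · rw [← ofReal_mgf (h_half θ hθ).1]
    exact ENNReal.ofReal_le_ofReal (h_half θ hθ).2
  have : Nonempty (Fin n) := ⟨⟨0, hn⟩⟩
  have hZ : ∀ i : Fin n, IdentDistrib (fun ω ↦ X (i + 1) ω - μ) Y Q Q := fun i ↦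
    (hident _ (by simp)).comp (measurable_id.sub measurable_const)
  have h_tail := measureReal_mean_ge_le_exp_neg
    (hindep.comp (fun _ x ↦ x - μ) fun _ ↦ measurable_id.sub measurable_const)
    (fun i ↦ (hXmeas _).sub measurable_const) (by positivity : 0 < 2 * b)
    (Real.log_pos (one_lt_one_div hα0 hα1))
    fun i θ hθ ↦ ⟨(hZ i).comp (measurable_const_mul θ).exp |>.integrable_iff.mpr (h_half θ hθ).1,
      mgf_congr_of_identDistrib _ _ (hZ i) θ ▸ (h_half θ hθ).2⟩
  have h_exp : exp (-log (1 / α)) = α := by rw [one_div, log_inv, neg_neg, exp_log hα0]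
  rw [Fintype.card_fin, show 4 * (2 * b) = 8 * b by ring, h_exp] at h_tail
  simp_rw [Finset.sum_Icc_one_eq_sum_fin n fun i ↦ X i _ - μ]
  rw [← ofReal_measureReal]
  exact ENNReal.ofReal_le_ofReal h_tail
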